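/- Strong law for self-normalized importance sampling over a mixture: if for each k = 1..K, (X^{(k,l)})_{l≥1} are i.i.d. from density p_k, and h, p₁,...,p_K are positive measurable functions with each ∫ (λ_k h / ∑_{k'} λ_{k'} p_{k'}/c_{k'}) p_k dμ finite, then (1/L) ∑_{k,l} h(X^{(k,l)}) / (∑_{k'} (L_{k'}/L)(1/c_{k'}) p_{k'}(X^{(k,l)}))) converges almost surely, as all L_k → ∞ with L_k/L → λ_k, to ∑_k λ_k ∫ h(x)/(∑_{k'} λ_{k'} p_{k'}(x)/c_{k'}) p_k(x) dμ(x). -/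

import Mathlib

/-!
Put `D = ∑ₖ λₖ pₖ / cₖ` and `g = h / D`. By the strong law in each block, the block averages of
`g(X^{(k,l)})` converge almost surely to `∫ g pₖ dμ`, so the estimator with the limiting weights
`λₖ` in the denominator converges to the stated limit. The actual estimator uses the empirical
weights `Lₖ / L` instead; once these are within relative error `r < 1` of the `λₖ`, its
denominator lies between `(1 - r) D` and `(1 + r) D` at every point, which squeezes the estimator
between the limiting-weight estimator divided by `1 + r` and by `1 - r`.
-/

open MeasureTheory ProbabilityTheory Filter Topology Finset

section WithDensityOfReal

variable {X : Type*} [MeasurableSpace X] {μ : Measure X} {p : X → ℝ}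

lemma integrable_withDensity_ofReal_iff (hp : Measurable p) (hp_nonneg : ∀ᵐ x ∂μ, 0 ≤ p x)
    {f : X → ℝ} :
    Integrable f (μ.withDensity fun x => ENNReal.ofReal (p x)) ↔
      Integrable (fun x => f x * p x) μ := by
  rw [integrable_withDensity_iff hp.ennreal_ofReal (.of_forall fun _ => ENNReal.ofReal_lt_top)]
  refine integrable_congr ?_
  filter_upwards [hp_nonneg] with x hx
  rw [ENNReal.toReal_ofReal hx]

lemma integral_withDensity_ofReal (hp : Measurable p) (hp_nonneg : ∀ᵐ x ∂μ, 0 ≤ p x)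
    (f : X → ℝ) :
    ∫ x, f x ∂μ.withDensity (fun x => ENNReal.ofReal (p x)) = ∫ x, f x * p x ∂μ := by
  rw [integral_withDensity_eq_integral_toReal_smul hp.ennreal_ofReal
    (.of_forall fun _ => ENNReal.ofReal_lt_top)]
  refine integral_congr_ae ?_
  filter_upwards [hp_nonneg] with x hx
  rw [ENNReal.toReal_ofReal hx, smul_eq_mul, mul_comm]

end WithDensityOfReal

lemma ae_tendsto_average_comp_of_map_eq {Ω X : Type*} [MeasurableSpace Ω] [MeasurableSpace X]
    {P : Measure Ω} {ν : Measure X} {Y : ℕ → Ω → X} (hY : ∀ l, Measurable (Y l))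
    (hindep : Pairwise fun i j => IndepFun (Y i) (Y j) P) (hlaw : ∀ l, P.map (Y l) = ν)
    {f : X → ℝ} (hf : Measurable f) (hf_int : Integrable f ν) :
    ∀ᵐ ω ∂P, Tendsto (fun m : ℕ => (m : ℝ)⁻¹ * ∑ l ∈ range m, f (Y l ω)) atTop
      (𝓝 (∫ x, f x ∂ν)) := by
  have hident (l : ℕ) : IdentDistrib (fun ω => f (Y l ω)) (fun ω => f (Y 0 ω)) P P :=
    IdentDistrib.comp ⟨(hY l).aemeasurable, (hY 0).aemeasurable, by rw [hlaw, hlaw]⟩ hf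
  have hf_int' : Integrable (fun ω => f (Y 0 ω)) P := by
    rw [← hlaw 0] at hf_int
    exact hf_int.comp_measurable (hY 0)
  have hmean : ∫ ω, f (Y 0 ω) ∂P = ∫ x, f x ∂ν := by
    rw [← hlaw 0, integral_map (hY 0).aemeasurable hf.aestronglyMeasurable]
  have hslln := strong_law_ae (fun l ω => f (Y l ω)) hf_int'
    (fun i j hij => (hindep hij).comp hf hf) hident
  rw [hmean] at hslln
  simpa only [smul_eq_mul] using hslln

lemma tendsto_sum_block_averages {α ι : Type*} [Fintype ι] {l : Filter α}
    {a : ι → ℕ → ℝ} {A lam : ι → ℝ} {L : ι → α → ℕ} {N : α → ℕ}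
    (ha : ∀ k, Tendsto (fun m : ℕ => (m : ℝ)⁻¹ * ∑ i ∈ range m, a k i) atTop (𝓝 (A k)))
    (hL : ∀ k, Tendsto (L k) l atTop)
    (hratio : ∀ k, Tendsto (fun n => (L k n : ℝ) / N n) l (𝓝 (lam k))) :
    Tendsto (fun n => 1 / (N n : ℝ) * ∑ k, ∑ i ∈ range (L k n), a k i) l
      (𝓝 (∑ k, lam k * A k)) := by
  refine (tendsto_finsetSum _ fun k _ =>
    ((hratio k).mul ((ha k).comp (hL k))).congr fun n => ?_).congr fun n => (mul_sum _ _ _).symm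
  -- The block size cancels, also when it is zero: the block sum is then empty.
  by_cases hk : (L k n : ℝ) = 0
  · simp [Function.comp_apply, Nat.cast_eq_zero.mp hk]
  · simp only [Function.comp_apply]
    field_simp

lemma exists_abs_sub_le_mul_of_tendsto {α ι : Type*} [Fintype ι] {l : Filter α}
    {lam : ι → ℝ} (hlam : ∀ k, 0 < lam k) {w : ι → α → ℝ}
    (hw : ∀ k, Tendsto (w k) l (𝓝 (lam k))) :
    ∃ r : α → ℝ, Tendsto r l (𝓝 0) ∧ ∀ n k, |w k n - lam k| ≤ r n * lam k := by
  refine ⟨fun n => ∑ k, |w k n / lam k - 1|, ?_, fun n k => ?_⟩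
  · simpa [div_self (hlam _).ne'] using
      tendsto_finsetSum univ fun k _ => (((hw k).div_const (lam k)).sub_const 1).abs
  · calc |w k n - lam k| = |(w k n / lam k - 1) * lam k| := by
          rw [sub_mul, div_mul_cancel₀ _ (hlam k).ne', one_mul]
      _ = |w k n / lam k - 1| * lam k := by rw [abs_mul, abs_of_pos (hlam k)]
      _ ≤ (∑ i, |w i n / lam i - 1|) * lam k :=
          mul_le_mul_of_nonneg_right (single_le_sum (f := fun i => |w i n / lam i - 1|)
            (fun i _ => abs_nonneg _) (mem_univ k)) (hlam k).le

lemma sum_mul_mem_Icc_of_abs_sub_le {ι : Type*} (s : Finset ι) {lam w q : ι → ℝ} {r : ℝ}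
    (hq : ∀ k ∈ s, 0 ≤ q k) (hw : ∀ k ∈ s, |w k - lam k| ≤ r * lam k) :
    ∑ k ∈ s, w k * q k ∈
      Set.Icc ((1 - r) * ∑ k ∈ s, lam k * q k) ((1 + r) * ∑ k ∈ s, lam k * q k) := by
  rw [Set.mem_Icc, mul_sum, mul_sum]
  constructor <;> refine sum_le_sum fun k hk => ?_ <;> rw [← mul_assoc] <;>
    refine mul_le_mul_of_nonneg_right ?_ (hq k hk) <;> linarith [abs_le.mp (hw k hk)]

lemma div_mem_Icc_of_mem_Icc_mul {a D D' r : ℝ} (ha : 0 ≤ a) (hD : 0 ≤ D) (hr : r < 1)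
    (hD' : D' ∈ Set.Icc ((1 - r) * D) ((1 + r) * D)) :
    a / D' ∈ Set.Icc (a / D / (1 + r)) (a / D / (1 - r)) := by
  obtain ⟨hlow, hup⟩ := hD'
  rcases hD.eq_or_lt with rfl | hD
  · obtain rfl : D' = 0 := by linarith
    simp
  have hr0 : 0 ≤ r := by nlinarith
  have hD'_pos : 0 < D' := lt_of_lt_of_le (by nlinarith) hlow
  rw [div_div, div_div]
  exact ⟨div_le_div_of_nonneg_left ha hD'_pos (by linarith),
    div_le_div_of_nonneg_left ha (by nlinarith) (by linarith)⟩

lemma tendsto_sum_div_sum_mul_of_tendsto {α ι κ β Y : Type*} [Fintype ι] [Fintype κ]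
    {l : Filter α} {lam : ι → ℝ} (hlam : ∀ k, 0 < lam k) {w : ι → α → ℝ}
    (hw : ∀ k, Tendsto (w k) l (𝓝 (lam k))) {q : ι → Y → ℝ} (hq : ∀ k y, 0 ≤ q k y)
    {f : Y → ℝ} (hf : ∀ y, 0 ≤ f y) {a : α → ℝ} (ha : ∀ n, 0 ≤ a n)
    {s : κ → α → Finset β} {y : κ → β → Y} {A : ℝ}
    (hT : Tendsto (fun n => a n * ∑ j, ∑ i ∈ s j n, f (y j i) / ∑ k, lam k * q k (y j i))
      l (𝓝 A)) :
    Tendsto (fun n => a n * ∑ j, ∑ i ∈ s j n, f (y j i) / ∑ k, w k n * q k (y j i))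
      l (𝓝 A) := by
  obtain ⟨r, hr, hwr⟩ := exists_abs_sub_le_mul_of_tendsto hlam hw
  set T : α → ℝ := fun n => a n * ∑ j, ∑ i ∈ s j n, f (y j i) / ∑ k, lam k * q k (y j i)
  have hlow : Tendsto (fun n => T n / (1 + r n)) l (𝓝 A) := by
    rw [← div_one A]
    exact hT.div (by simpa using tendsto_const_nhds.add hr) one_ne_zero
  have hup : Tendsto (fun n => T n / (1 - r n)) l (𝓝 A) := by
    rw [← div_one A]
    exact hT.div (by simpa using tendsto_const_nhds.sub hr) one_ne_zero
  have hbounds : ∀ᶠ n in l, ∀ z, f z / ∑ k, w k n * q k z ∈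
      Set.Icc (f z / (∑ k, lam k * q k z) / (1 + r n))
        (f z / (∑ k, lam k * q k z) / (1 - r n)) := by
    filter_upwards [hr.eventually_lt_const zero_lt_one] with n hrn z
    exact div_mem_Icc_of_mem_Icc_mul (hf z) (sum_nonneg fun k _ => mul_nonneg (hlam k).le (hq k z))
      hrn (sum_mul_mem_Icc_of_abs_sub_le univ (fun k _ => hq k z) (fun k _ => hwr n k))
  refine tendsto_of_tendsto_of_tendsto_of_le_of_le' hlow hup ?_ ?_ <;>
    filter_upwards [hbounds] with n hn <;> simp only [T, mul_div_assoc, sum_div] <;>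
    refine mul_le_mul_of_nonneg_left (sum_le_sum fun j _ => sum_le_sum fun i _ => ?_) (ha n)
  exacts [(hn _).1, (hn _).2]

theorem slln_mixture_importance_sampling_general
    {X : Type*} [MeasurableSpace X] (μ : Measure X)
    {K : ℕ} (p : Fin K → X → ℝ) (hp_meas : ∀ k, Measurable (p k))
    (hp_pos : ∀ k x, 0 < p k x)
    (c : Fin K → ℝ) (hc : ∀ k, 0 < c k)
    (lam : Fin K → ℝ) (hlam : ∀ k, 0 < lam k ∧ lam k < 1)
    (h : X → ℝ) (hh_meas : Measurable h) (hh_nonneg : ∀ x, 0 ≤ h x)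
    (hint : ∀ k, Integrable
      (fun x => lam k * h x / (∑ k', lam k' * p k' x / c k') * p k x) μ)
    {Ω : Type*} [MeasureSpace Ω]
    (Xs : Fin K → ℕ → Ω → X)
    (hXmeas : ∀ k l, Measurable (Xs k l))
    (hindep : iIndepFun
      (fun (kl : Fin K × ℕ) ω => Xs kl.1 kl.2 ω) ℙ)
    (hlaw : ∀ k l, Measure.map (Xs k l) ℙ =
      μ.withDensity (fun x => ENNReal.ofReal (p k x)))
    (Lk : Fin K → ℕ → ℕ) (Ltot : ℕ → ℕ)
    (hLk_top : ∀ k, Tendsto (fun n => Lk k n) atTop atTop)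
    (hLk_ratio : ∀ k, Tendsto (fun n => (Lk k n : ℝ) / (Ltot n : ℝ)) atTop (nhds (lam k))) :
    ∀ᵐ ω ∂(ℙ : Measure Ω),
      Tendsto
        (fun n => (1 / (Ltot n : ℝ)) *
          ∑ k, ∑ l ∈ Finset.range (Lk k n),
            h (Xs k l ω) /
              (∑ k', ((Lk k' n : ℝ) / (Ltot n : ℝ)) * (1 / c k') * p k' (Xs k l ω)))
        atTop
        (nhds (∑ k, lam k *
          ∫ x, h x / (∑ k', lam k' * p k' x / c k') * p k x ∂μ)) := by
  set D : X → ℝ := fun x => ∑ k', lam k' * p k' x / c k'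
  set g : X → ℝ := fun x => h x / D x
  have hg_meas : Measurable g :=
    hh_meas.div (Finset.measurable_sum _ fun k _ => ((hp_meas k).const_mul _).div_const _)
  have hp_nonneg (k : Fin K) : ∀ᵐ x ∂μ, 0 ≤ p k x := .of_forall fun x => (hp_pos k x).le
  have hg_int (k : Fin K) : Integrable g (μ.withDensity fun x => ENNReal.ofReal (p k x)) := by
    rw [integrable_withDensity_ofReal_iff (hp_meas k) (hp_nonneg k)]
    refine ((hint k).const_mul (lam k)⁻¹).congr (.of_forall fun x => ?_)
    simp only [g, D]
    field_simp [(hlam k).1.ne']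
  have hblocks : ∀ᵐ ω ∂ℙ, ∀ k, Tendsto (fun m : ℕ => (m : ℝ)⁻¹ * ∑ l ∈ range m, g (Xs k l ω))
      atTop (𝓝 (∫ x, g x * p k x ∂μ)) := by
    refine ae_all_iff.2 fun k => ?_
    rw [← integral_withDensity_ofReal (hp_meas k) (hp_nonneg k)]
    exact ae_tendsto_average_comp_of_map_eq (hXmeas k)
      (fun i j hij => hindep.indepFun (show ((k, i) : Fin K × ℕ) ≠ (k, j) by simp [hij]))
      (hlaw k) hg_meas (hg_int k)
  filter_upwards [hblocks] with ω hω
  have hT := tendsto_sum_block_averages hω hLk_top hLk_ratio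
  simp only [g, D, mul_div_assoc] at hT
  convert tendsto_sum_div_sum_mul_of_tendsto (fun k => (hlam k).1) hLk_ratio
    (fun k x => div_nonneg (hp_pos k x).le (hc k).le) hh_nonneg (fun n => by positivity) hT using 7
  · ring
  · simp only [mul_div_assoc]

theorem slln_mixture_importance_sampling
    {X : Type*} [MeasurableSpace X] (μ : Measure X) [SigmaFinite μ]
    {K : ℕ} (p : Fin K → X → ℝ) (hp_meas : ∀ k, Measurable (p k))
    (hp_pos : ∀ k x, 0 < p k x)
    (hp_dens : ∀ k, ∫ x, p k x ∂μ = 1)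
    (c : Fin K → ℝ) (hc : ∀ k, 0 < c k)
    (lam : Fin K → ℝ) (hlam : ∀ k, 0 < lam k ∧ lam k < 1)
    (hlam_sum : ∑ k, lam k = 1)
    (h : X → ℝ) (hh_meas : Measurable h) (hh_nonneg : ∀ x, 0 ≤ h x)
    (hint : ∀ k, Integrable
      (fun x => lam k * h x / (∑ k', lam k' * p k' x / c k') * p k x) μ)
    {Ω : Type*} [MeasureSpace Ω] [IsProbabilityMeasure (ℙ : Measure Ω)]
    (Xs : Fin K → ℕ → Ω → X)
    (hXmeas : ∀ k l, Measurable (Xs k l))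
    (hindep : iIndepFun
      (fun (kl : Fin K × ℕ) ω => Xs kl.1 kl.2 ω) ℙ)
    (hlaw : ∀ k l, Measure.map (Xs k l) ℙ =
      μ.withDensity (fun x => ENNReal.ofReal (p k x)))
    (Lk : Fin K → ℕ → ℕ) (Ltot : ℕ → ℕ)
    (hLtot : ∀ n, Ltot n = ∑ k, Lk k n)
    (hLk_top : ∀ k, Tendsto (fun n => Lk k n) atTop atTop)
    (hLk_ratio : ∀ k, Tendsto (fun n => (Lk k n : ℝ) / (Ltot n : ℝ)) atTop (nhds (lam k))) :
    ∀ᵐ ω ∂(ℙ : Measure Ω),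
      Tendsto
        (fun n => (1 / (Ltot n : ℝ)) *
          ∑ k, ∑ l ∈ Finset.range (Lk k n),
            h (Xs k l ω) /
              (∑ k', ((Lk k' n : ℝ) / (Ltot n : ℝ)) * (1 / c k') * p k' (Xs k l ω)))
        atTop
        (nhds (∑ k, lam k *
          ∫ x, h x / (∑ k', lam k' * p k' x / c k') * p k x ∂μ)) :=
  slln_mixture_importance_sampling_general μ p hp_meas hp_pos c hc lam hlam h hh_meas hh_nonneg hint
    Xs hXmeas hindep hlaw Lk Ltot hLk_top hLk_ratio
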